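/- Let X be a connected compact Hausdorff abelian topological group. Then every uniformly continuous real-valued function on the group (X^ℕ, 𝔲) of all X-valued sequences with the uniform topology is bounded, and every uniformly continuous real-valued function on the group F₀(X) of X-valued null sequences with the uniform topology is bounded. -/

import Mathlib

/-!
Connectedness forces the subgroup generated by a symmetric open neighbourhood `U` of `0` to be
all of `X`, and compactness then yields a single `N` with `N • U = X`. So every sequence, and
every null sequence, is reached from `0` in `N` steps whose increments lie coordinatewise in `U`;
a function moving by less than `1` along each step is bounded by `|f 0| + N`.
-/

open Filter Topology Set

/-- The group of `X`-valued null sequences. -/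
def c0 (X : Type*) [AddCommGroup X] [TopologicalSpace X] [IsTopologicalAddGroup X] :
    AddSubgroup (ℕ → X) where
  carrier := {x : ℕ → X | Tendsto x atTop (𝓝 0)}
  zero_mem' := tendsto_const_nhds
  add_mem' := fun ha hb => by simpa using (add_zero (0 : X)) ▸ ha.add hb
  neg_mem' := fun ha => by simpa using (neg_zero (G := X)) ▸ ha.neg

open Pointwise

@[to_additive]
theorem Subgroup.closure_eq_top_of_mem_nhds {G : Type*} [Group G] [TopologicalSpace G]
    [IsTopologicalGroup G] [ConnectedSpace G] {U : Set G} (hU : U ∈ 𝓝 1) :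
    closure U = ⊤ := by
  have hopen : IsOpen (closure U : Set G) :=
    (closure U).isOpen_of_mem_nhds (mem_of_superset hU subset_closure)
  exact SetLike.coe_injective <|
    IsClopen.eq_univ ⟨(closure U).isClosed_of_isOpen hopen, hopen⟩ ⟨1, (closure U).one_mem⟩

@[to_additive]
theorem Subgroup.coe_closure_eq_iUnion_pow {G : Type*} [Group G] {U : Set G} (hU : U⁻¹ = U) :
    (closure U : Set G) = ⋃ n : ℕ, U ^ n := by
  refine Subset.antisymm (fun x hx => ?_) (iUnion_subset fun n => pow_subset subset_closure)
  induction hx using closure_induction_left with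
  | one => exact mem_iUnion.2 ⟨0, by simp⟩
  | mul_left u hu y _ ih =>
    obtain ⟨n, hy⟩ := mem_iUnion.1 ih
    exact mem_iUnion.2 ⟨n + 1, pow_succ' U n ▸ mul_mem_mul hu hy⟩
  | inv_mul_cancel u hu y _ ih =>
    obtain ⟨n, hy⟩ := mem_iUnion.1 ih
    exact mem_iUnion.2 ⟨n + 1, pow_succ' U n ▸ mul_mem_mul (hU ▸ inv_mem_inv.2 hu) hy⟩

@[to_additive]
theorem exists_pow_eq_univ_of_mem_nhds {G : Type*} [Group G] [TopologicalSpace G]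
    [IsTopologicalGroup G] [CompactSpace G] [ConnectedSpace G] {V : Set G} (hV : V ∈ 𝓝 1) :
    ∃ n : ℕ, V ^ n = univ := by
  set U := interior V ∩ (interior V)⁻¹
  have hV1 : (1 : G) ∈ interior V := mem_interior_iff_mem_nhds.2 hV
  have hU1 : (1 : G) ∈ U := ⟨hV1, by simpa using hV1⟩
  have hUopen : IsOpen U := isOpen_interior.inter isOpen_interior.inv
  have hUinv : U⁻¹ = U := by simp only [U, inter_inv, inv_inv, inter_comm]
  have hcover : univ ⊆ ⋃ n : ℕ, U ^ (n + 1) := by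
    rw [← Subgroup.coe_top, ← Subgroup.closure_eq_top_of_mem_nhds (hUopen.mem_nhds hU1),
      Subgroup.coe_closure_eq_iUnion_pow hUinv]
    exact iUnion_subset fun n => subset_iUnion_of_subset n <| Set.pow_right_monotone hU1 n.le_succ
  obtain ⟨n, hn⟩ := isCompact_univ.elim_directed_cover _
    (fun n => pow_succ U n ▸ hUopen.mul_left) hcover
    ((Set.pow_right_monotone hU1).comp (strictMono_id.add_const 1).monotone).directed_le
  exact ⟨n + 1, univ_subset_iff.1 <| hn.trans <| pow_subset_pow_left <|
    inter_subset_left.trans interior_subset⟩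

theorem abs_sub_le_of_mem_nsmul {G : Type*} [AddGroup G] {f : G → ℝ} {S : Set G} {c : ℝ}
    (hf : ∀ a b, a - b ∈ S → |f a - f b| ≤ c) {n : ℕ} {x : G} (hx : x ∈ n • S) :
    |f x - f 0| ≤ n * c := by
  induction n generalizing x with
  | zero =>
    rw [zero_nsmul, Set.mem_zero] at hx
    simp [hx]
  | succ n ih =>
    rw [succ_nsmul'] at hx
    obtain ⟨s, hs, a, ha, rfl⟩ := hx
    have hstep : |f (s + a) - f a| ≤ c := hf _ _ (by rwa [add_sub_cancel_right])
    calc |f (s + a) - f 0| ≤ |f (s + a) - f a| + |f a - f 0| := abs_sub_le _ _ _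
      _ ≤ c + n * c := add_le_add hstep (ih ha)
      _ = (n + 1 : ℕ) * c := by push_cast; ring

theorem mem_nsmul_setOf_tendsto {ι X : Type*} [AddGroup X] [TopologicalSpace X]
    [IsTopologicalAddGroup X] {l : Filter ι} {V : Set X} (hV : V ∈ 𝓝 0) (n : ℕ) {x : ι → X}
    (hxl : Tendsto x l (𝓝 0)) (hxV : ∀ i, x i ∈ n • V) :
    x ∈ n • {y : ι → X | Tendsto y l (𝓝 0) ∧ ∀ i, y i ∈ V} := by
  induction n generalizing x with
  | zero =>
    have hx : x = 0 := funext fun i => Set.mem_zero.1 (zero_nsmul V ▸ hxV i)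
    rw [hx, zero_nsmul]
    exact Set.mem_zero.2 rfl
  | succ n ih =>
    -- Coordinates already in `V` are split as `0 + x i`, so the first summand vanishes eventually.
    have hsplit : ∀ i, ∃ a ∈ n • V, ∃ v ∈ V, a + v = x i ∧ (x i ∈ V → a = 0) := by
      intro i
      by_cases hi : x i ∈ V
      · exact ⟨0, zero_mem_nsmul (mem_of_mem_nhds hV), x i, hi, zero_add _, fun _ => rfl⟩
      · obtain ⟨a, ha, v, hv, hav⟩ := succ_nsmul V n ▸ hxV i
        exact ⟨a, ha, v, hv, hav, fun h => (hi h).elim⟩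
    choose a ha v hv hav ha0 using hsplit
    have hal : Tendsto a l (𝓝 0) :=
      tendsto_const_nhds.congr' <| (hxl.eventually_mem hV).mono fun i hi => (ha0 i hi).symm
    have hx : x = a + v := funext fun i => (hav i).symm
    have hvl : Tendsto v l (𝓝 0) := by
      simpa [hx] using hal.neg.add hxl
    rw [hx, succ_nsmul]
    exact add_mem_add (ih hal ha) ⟨hvl, hv⟩

theorem exists_abs_le_of_forall_mem_nsmul {G : Type*} [AddGroup G] {f : G → ℝ} {S : Set G}
    (hf : ∀ a b, a - b ∈ S → |f a - f b| < 1) {n : ℕ} (hS : ∀ x, x ∈ n • S) :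
    ∃ C : ℝ, ∀ x, |f x| ≤ C := by
  refine ⟨|f 0| + n, fun x => ?_⟩
  have := abs_sub_le_of_mem_nsmul (fun a b hab => (hf a b hab).le) (hS x)
  linarith [abs_sub_abs_le_abs_sub (f x) (f 0)]

theorem AddSubgroup.mem_nsmul_preimage_coe {G : Type*} [AddGroup G] {H : AddSubgroup G}
    {T : Set G} (hT : T ⊆ H) {n : ℕ} {x : H} (hx : (x : G) ∈ n • T) :
    x ∈ n • ((↑) ⁻¹' T : Set H) := by
  have himage : H.subtype '' ((↑) ⁻¹' T) = T :=
    image_preimage_eq_of_subset (by simpa using hT)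
  rw [← himage, ← image_nsmul] at hx
  obtain ⟨y, hy, hyx⟩ := hx
  exact Subtype.ext hyx ▸ hy

theorem uniformly_continuous_bounded_on_uniform_sequence_groups_general (X : Type*) [AddCommGroup X]
    [TopologicalSpace X] [IsTopologicalAddGroup X] [CompactSpace X] [ConnectedSpace X] :
    (∀ f : (ℕ → X) → ℝ,
        (∀ ε > (0 : ℝ), ∃ V ∈ 𝓝 (0 : X), ∀ x y : ℕ → X,
          (∀ n, x n - y n ∈ V) → |f x - f y| < ε) →
        ∃ C : ℝ, ∀ x : ℕ → X, |f x| ≤ C) ∧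
      (∀ f : c0 X → ℝ,
        (∀ ε > (0 : ℝ), ∃ V ∈ 𝓝 (0 : X), ∀ x y : c0 X,
          (∀ n, (x : ℕ → X) n - (y : ℕ → X) n ∈ V) → |f x - f y| < ε) →
        ∃ C : ℝ, ∀ x : c0 X, |f x| ≤ C) := by
  constructor
  · intro f hf
    obtain ⟨V, hV, hfV⟩ := hf 1 one_pos
    obtain ⟨N, hN⟩ := exists_nsmul_eq_univ_of_mem_nhds hV
    -- Along `⊥` every sequence tends to `0`, so no condition is imposed on the steps.
    exact exists_abs_le_of_forall_mem_nsmul (fun a b hab => hfV a b hab.2) fun x =>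
      mem_nsmul_setOf_tendsto (l := ⊥) hV N tendsto_bot fun i => hN ▸ mem_univ (x i)
  · intro f hf
    obtain ⟨V, hV, hfV⟩ := hf 1 one_pos
    obtain ⟨N, hN⟩ := exists_nsmul_eq_univ_of_mem_nhds hV
    exact exists_abs_le_of_forall_mem_nsmul (fun a b hab => hfV a b hab.2) fun x =>
      (c0 X).mem_nsmul_preimage_coe (fun y hy => hy.1) <|
        mem_nsmul_setOf_tendsto hV N x.2 fun i => hN ▸ mem_univ _

/-- Let `X` be a connected compact Hausdorff abelian topological group. Then every uniformly
continuous real-valued function on the group `(X^ℕ, 𝔲)` of all `X`-valued sequences with the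
uniform topology is bounded, and every uniformly continuous real-valued function on the group
`F₀(X)` of `X`-valued null sequences with the uniform topology is bounded. Here uniform
continuity of `f` means: for every `ε > 0` there is a neighborhood `V` of `0` in `X` such
that `|f x − f y| < ε` whenever all coordinates of `x − y` lie in `V` (the sets
`V^ℕ`, resp. `V^ℕ ∩ c₀(X)`, form the neighborhood base of `0` for the uniform topology). -/
theorem uniformly_continuous_bounded_on_uniform_sequence_groups (X : Type*) [AddCommGroup X]
    [TopologicalSpace X] [IsTopologicalAddGroup X] [CompactSpace X] [ConnectedSpace X]
    [T2Space X] :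
    (∀ f : (ℕ → X) → ℝ,
        (∀ ε > (0 : ℝ), ∃ V ∈ 𝓝 (0 : X), ∀ x y : ℕ → X,
          (∀ n, x n - y n ∈ V) → |f x - f y| < ε) →
        ∃ C : ℝ, ∀ x : ℕ → X, |f x| ≤ C) ∧
      (∀ f : c0 X → ℝ,
        (∀ ε > (0 : ℝ), ∃ V ∈ 𝓝 (0 : X), ∀ x y : c0 X,
          (∀ n, (x : ℕ → X) n - (y : ℕ → X) n ∈ V) → |f x - f y| < ε) →
        ∃ C : ℝ, ∀ x : c0 X, |f x| ≤ C) :=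
  uniformly_continuous_bounded_on_uniform_sequence_groups_general X
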